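/- arXiv:1203.6015 — 2 statements merged into one kernel-verified Lean document; each statement's English description precedes it below -/
import Mathlib

section
/- Let ℓ = Σᵢ nᵢeᵢ be an edge with mass η(ℓ) ∈ {0, −2} and |ℓ|₁ ≤ 2q, and let i be in the support of ℓ. Define ℓ̄(ξ) = ℓ(ξ) if η(ℓ) = 0 and ℓ̄(ξ) = −ℓ(ξ) + 2(q+1)A_q(ξ) if η(ℓ) = −2, where ℓ(ξ) = (1/(q+1)) Σⱼ nⱼ ∂A_{q+1}/∂ξⱼ. Then the coefficient of the monomial ξᵢ^q in ℓ̄(ξ) equals −q·nᵢ if η(ℓ) = 0, and equals 4(q+1) + q·nᵢ if η(ℓ) = −2. -/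
open Finset MvPolynomial

/-- `A_r(ξ) = Σ_{β ∈ ℕ^m, |β|₁ = r} multinomial(r,β)² ξ^β` over `ℚ`. -/
noncomputable def Apoly (m r : ℕ) : MvPolynomial (Fin m) ℚ :=
  ∑ β ∈ (Fintype.piFinset fun _ : Fin m => Finset.range (r + 1)).filter
      (fun β => ∑ i, β i = r),
    MvPolynomial.C ((Nat.multinomial Finset.univ β : ℚ) ^ 2) *
      ∏ i, MvPolynomial.X i ^ β i

lemma prod_X_pow_fun {m : ℕ} (β : Fin m → ℕ) :
    (∏ i, MvPolynomial.X i ^ β i : MvPolynomial (Fin m) ℚ) =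
      monomial (Finsupp.equivFunOnFinite.symm β) 1 := by
  set s : Fin m →₀ ℕ := Finsupp.equivFunOnFinite.symm β with hs
  have hβ : β = ⇑s := rfl
  rw [hβ, ← prod_X_pow_eq_monomial]
  exact (Finset.prod_subset (Finset.subset_univ _) (by
    intro x _ hx
    simp [Finsupp.notMem_support_iff.mp hx])).symm

lemma Apoly_eq (m r : ℕ) : Apoly m r =
    ∑ β ∈ (Fintype.piFinset fun _ : Fin m => Finset.range (r + 1)).filter
      (fun β => ∑ i, β i = r),
    monomial (Finsupp.equivFunOnFinite.symm β)
      ((Nat.multinomial Finset.univ β : ℚ) ^ 2) := by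
  unfold Apoly
  refine Finset.sum_congr rfl fun β _ => ?_
  rw [prod_X_pow_fun, C_mul_monomial, mul_one]

lemma coeff_Apoly (m r : ℕ) (d : Fin m →₀ ℕ) :
    coeff d (Apoly m r) =
    if ∑ k, d k = r then ((Nat.multinomial Finset.univ ⇑d : ℚ)) ^ 2 else 0 := by
  rw [Apoly_eq, MvPolynomial.coeff_sum]
  have h1 : ∀ β : Fin m → ℕ,
      coeff d (monomial (Finsupp.equivFunOnFinite.symm β)
        ((Nat.multinomial Finset.univ β : ℚ) ^ 2)) =
      if β = ⇑d then ((Nat.multinomial Finset.univ β : ℚ)) ^ 2 else 0 := by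
    intro β
    rw [coeff_monomial]
    congr 1
    simp only [eq_iff_iff]
    constructor
    · intro h; rw [← h]; rfl
    · intro h; rw [h]; simp
  simp only [h1]
  rw [Finset.sum_ite_eq' _ (⇑d)]
  by_cases hd : ∑ k, d k = r
  · have : ⇑d ∈ (Fintype.piFinset fun _ : Fin m => Finset.range (r + 1)).filter
        (fun β => ∑ i, β i = r) := by
      simp only [Finset.mem_filter, Fintype.mem_piFinset, Finset.mem_range]
      refine ⟨fun k => ?_, hd⟩
      have : d k ≤ r := hd ▸ Finset.single_le_sum (fun _ _ => Nat.zero_le _) (mem_univ k)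
      omega
    rw [if_pos this, if_pos hd]
  · rw [if_neg, if_neg hd]
    simp only [Finset.mem_filter, Fintype.mem_piFinset, Finset.mem_range, not_and]
    intro _; exact hd

lemma multinomial_single {m : ℕ} (i : Fin m) (r : ℕ) :
    Nat.multinomial Finset.univ ⇑(Finsupp.single i r) = 1 := by
  have spec := Nat.multinomial_spec Finset.univ ⇑(Finsupp.single i r)
  have hprod : ∏ k, Nat.factorial ((Finsupp.single i r : Fin m →₀ ℕ) k) = Nat.factorial r := by
    rw [Finset.prod_eq_single i (fun k _ hk => by simp [Finsupp.single_apply, Ne.symm hk])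
      (by simp)]
    simp
  have hsum : ∑ k, (Finsupp.single i r : Fin m →₀ ℕ) k = r := by
    simp [Finsupp.single_apply, Finset.sum_ite_eq]
  rw [hprod, hsum] at spec
  have := Nat.factorial_pos r
  nlinarith [Nat.multinomial_pos Finset.univ ⇑(Finsupp.single i r)]

lemma sum_ss {m : ℕ} (i j : Fin m) (q : ℕ) :
    ∑ k, (Finsupp.single i q + Finsupp.single j 1 : Fin m →₀ ℕ) k = q + 1 := by
  simp only [Finsupp.add_apply, Finset.sum_add_distrib, Finsupp.single_apply,
    Finset.sum_ite_eq, Finset.mem_univ, if_true]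

lemma multinomial_pair {m : ℕ} {i j : Fin m} (hij : j ≠ i) (q : ℕ) :
    Nat.multinomial Finset.univ ⇑(Finsupp.single i q + Finsupp.single j 1 : Fin m →₀ ℕ) = q + 1 := by
  set g : Fin m →₀ ℕ := Finsupp.single i q + Finsupp.single j 1 with hg
  have spec := Nat.multinomial_spec Finset.univ ⇑g
  have hprod : ∏ k, Nat.factorial (g k) = Nat.factorial q := by
    rw [Finset.prod_eq_single i (fun k _ hk => ?_) (by simp)]
    · simp [hg, Finsupp.add_apply, Finsupp.single_apply, hij]
    · rcases eq_or_ne k j with rfl | h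
      · simp [hg, Finsupp.add_apply, Finsupp.single_apply, Ne.symm hk]
      · simp [hg, Finsupp.add_apply, Finsupp.single_apply, Ne.symm hk, Ne.symm h]
  rw [hprod, sum_ss i j q] at spec
  have hpos := Nat.factorial_pos q
  have : Nat.factorial q * Nat.multinomial Finset.univ ⇑g = Nat.factorial q * (q + 1) := by
    rw [spec, Nat.factorial_succ]; ring
  exact Nat.eq_of_mul_eq_mul_left hpos this

lemma coeff_pderiv_Apoly {m : ℕ} (q : ℕ) (i j : Fin m) :
    coeff (Finsupp.single i q) (pderiv j (Apoly m (q + 1))) =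
      if j = i then (q + 1 : ℚ) else ((q : ℚ) + 1) ^ 2 := by
  set g : Fin m →₀ ℕ := Finsupp.single i q + Finsupp.single j 1 with hg
  rw [Apoly_eq, map_sum]
  simp only [pderiv_monomial]
  rw [MvPolynomial.coeff_sum]
  have h1 : ∀ β : Fin m → ℕ,
      coeff (Finsupp.single i q) (monomial (Finsupp.equivFunOnFinite.symm β - Finsupp.single j 1)
        ((Nat.multinomial Finset.univ β : ℚ) ^ 2 * (Finsupp.equivFunOnFinite.symm β) j)) =
      if β = ⇑g then (Nat.multinomial Finset.univ β : ℚ) ^ 2 * β j else 0 := by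
    intro β
    rw [coeff_monomial]
    have hco : (Finsupp.equivFunOnFinite.symm β) j = β j := rfl
    by_cases hβ : β = ⇑g
    · have hsy : Finsupp.equivFunOnFinite.symm β = g := by rw [hβ]; simp
      rw [if_pos hβ, if_pos, hco]
      rw [hsy, hg, add_tsub_cancel_right]
    · rw [if_neg hβ]
      by_cases hj : β j = 0
      · simp [hco, hj]
      · rw [if_neg]
        intro hcon
        apply hβ
        have hle : Finsupp.single j 1 ≤ Finsupp.equivFunOnFinite.symm β := by
          rw [Finsupp.single_le_iff]
          exact Nat.one_le_iff_ne_zero.mpr hj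
        have : Finsupp.equivFunOnFinite.symm β = g := by
          rw [hg, ← hcon, tsub_add_cancel_of_le hle]
        calc β = ⇑(Finsupp.equivFunOnFinite.symm β) := rfl
          _ = ⇑g := by rw [this]
  simp only [h1]
  rw [Finset.sum_ite_eq' _ (⇑g)]
  have hmem : ⇑g ∈ (Fintype.piFinset fun _ : Fin m => Finset.range (q + 1 + 1)).filter
      (fun β => ∑ k, β k = q + 1) := by
    simp only [Finset.mem_filter, Fintype.mem_piFinset, Finset.mem_range]
    constructor
    · intro k
      have h1 : g k ≤ ∑ l, g l := Finset.single_le_sum (fun _ _ => Nat.zero_le _) (mem_univ k)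
      have h2 : ∑ l, g l = q + 1 := by rw [hg]; exact sum_ss i j q
      omega
    · rw [hg]; exact sum_ss i j q
  rw [if_pos hmem]
  by_cases hij : j = i
  · subst hij
    have hg' : g = Finsupp.single j (q + 1) := by
      rw [hg, ← Finsupp.single_add]
    rw [hg', multinomial_single]
    simp [Finsupp.single_apply]
  · rw [hg, multinomial_pair hij, if_neg hij]
    have : (Finsupp.single i q + Finsupp.single j 1 : Fin m →₀ ℕ) j = 1 := by
      simp [Finsupp.single_apply, Ne.symm hij, hij]
    rw [this]
    push_cast
    ring

/-- for an edge ℓ = Σᵢ nᵢeᵢ (η(ℓ) ∈ {0,−2}, |ℓ|₁ ≤ 2q) and i in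
the support of ℓ, the coefficient of ξᵢ^q in ℓ̄(ξ) is −q·nᵢ in the black case
(η = 0, ℓ̄ = ℓ(ξ)) and 4(q+1) + q·nᵢ in the red case
(η = −2, ℓ̄ = −ℓ(ξ) + 2(q+1)A_q), where ℓ(ξ) = (1/(q+1)) Σⱼ nⱼ ∂A_{q+1}/∂ξⱼ. -/
theorem coeff_xi_pow_q_lbar (q m : ℕ) (hq : 1 ≤ q) (n : Fin m → ℤ) (i : Fin m)
    (hni : n i ≠ 0) (hnorm : ∑ j, (n j).natAbs ≤ 2 * q) :
    let lpoly : MvPolynomial (Fin m) ℚ :=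
      ((q : ℚ) + 1)⁻¹ • ∑ j, n j • MvPolynomial.pderiv j (Apoly m (q + 1))
    (∑ j, n j = 0 →
        MvPolynomial.coeff (Finsupp.single i q) lpoly = -(q : ℚ) * (n i : ℚ)) ∧
    (∑ j, n j = -2 →
        MvPolynomial.coeff (Finsupp.single i q)
            (-lpoly + (2 * ((q : ℚ) + 1)) • Apoly m q) =
          4 * ((q : ℚ) + 1) + (q : ℚ) * (n i : ℚ)) := by
  intro lpoly
  have hq1 : ((q : ℚ) + 1) ≠ 0 := by positivity
  have hcoefflp : ∀ S : ℚ, (∑ j, (n j : ℚ)) = S →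
      coeff (Finsupp.single i q) lpoly =
        ((q : ℚ) + 1)⁻¹ * ((n i) * ((q : ℚ) + 1) + (S - n i) * ((q : ℚ) + 1) ^ 2) := by
    intro S hS
    show coeff _ (((q : ℚ) + 1)⁻¹ • ∑ j, n j • MvPolynomial.pderiv j (Apoly m (q + 1))) = _
    rw [MvPolynomial.coeff_smul, smul_eq_mul]
    congr 1
    rw [MvPolynomial.coeff_sum]
    have : ∀ j, coeff (Finsupp.single i q) ((n j : ℤ) • pderiv j (Apoly m (q + 1))) =
        (n j : ℚ) * (if j = i then (q + 1 : ℚ) else ((q : ℚ) + 1) ^ 2) := by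
      intro j
      rw [MvPolynomial.coeff_smul, coeff_pderiv_Apoly, zsmul_eq_mul]
    simp only [this]
    have hsplit : ∀ j : Fin m,
        (n j : ℚ) * (if j = i then (q + 1 : ℚ) else ((q : ℚ) + 1) ^ 2) =
        (n j : ℚ) * ((q : ℚ) + 1) ^ 2 +
          (if j = i then (n j : ℚ) * (((q : ℚ) + 1) - ((q : ℚ) + 1) ^ 2) else 0) := by
      intro j
      split_ifs with h <;> ring
    rw [Finset.sum_congr rfl fun j _ => hsplit j, Finset.sum_add_distrib,
      Finset.sum_ite_eq' _ i, if_pos (mem_univ i), ← Finset.sum_mul, hS]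
    push_cast
    ring
  constructor
  · intro h0
    have hS : (∑ j, (n j : ℚ)) = 0 := by
      rw [← Int.cast_zero, ← h0]; push_cast; rfl
    rw [hcoefflp 0 hS]
    field_simp
    ring
  · intro h2
    have hS : (∑ j, (n j : ℚ)) = -2 := by
      rw [show ((-2 : ℚ)) = ((-2 : ℤ) : ℚ) by norm_num, ← h2]; push_cast; rfl
    rw [MvPolynomial.coeff_add, MvPolynomial.coeff_neg, hcoefflp (-2) hS,
      MvPolynomial.coeff_smul, coeff_Apoly]
    have hsum : ∑ k, (Finsupp.single i q : Fin m →₀ ℕ) k = q := by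
      simp [Finsupp.single_apply, Finset.sum_ite_eq]
    rw [if_pos hsum, multinomial_single]
    push_cast
    field_simp
    ring
end

section
/- For the black edge ℓ = e₁ − e₂, the squared coefficient c(ℓ)² = (q+1)² ξ₁ ξ₂ (Σ_{α ∈ ℕ^m, |α|₁ = q−1} multinomial(q, α₁+1, α₂,...,α_m) multinomial(q, α₁, α₂+1,...,α_m) ξ^α)², evaluated at ξ₁ = ξ₂, contains the monomial (q+1)² q⁴ ξ₁² ξ₃^{2(q−1)}; hence for a prime power p^k exactly dividing q+1 (q+1 = p^k u with gcd(p,u)=1 and m ≥ 3), c(ℓ)²|_{ξ₁=ξ₂} is not divisible by p^{4k}. -/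
/-!
Identifying ξ₂ with ξ₁ turns ξ₁ξ₂ into ξ₁², so the coefficient of ξ₁²ξ₃^{2(q-1)} is (q+1)² times
the coefficient of ξ₃^{2(q-1)} in the square of the renamed sum S. Since S is homogeneous of
degree q - 1, that coefficient is the square of the coefficient of ξ₃^{q-1}, and since no variable
other than ξ₃ is sent to ξ₃, this is the coefficient of α = (q-1)e₃ in S, namely
multinomial(q; e₁ + (q-1)e₃) · multinomial(q; e₂ + (q-1)e₃) = q². Finally p ∤ q because p ∣ q + 1,
so the exact power of p dividing (q+1)²q⁴ is p^{2k}.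
-/

open Finset MvPolynomial

theorem Nat.multinomial_single_add_ite {α : Type*} [Fintype α] [DecidableEq α] {a b : α}
    (hab : a ≠ b) (n : ℕ) :
    Nat.multinomial univ (fun j => Finsupp.single b n j + if j = a then 1 else 0) = n + 1 := by
  rw [← Nat.multinomial_congr_of_sdiff (subset_univ {a, b}) (by aesop) (fun _ _ => rfl),
    Nat.binomial_eq_choose hab]
  simp [hab, Ne.symm hab, add_comm]

theorem Nat.not_pow_dvd_sq_mul_pow {p k u q : ℕ} (hp : p.Prime) (hk : 1 ≤ k)
    (hq : q + 1 = p ^ k * u) (hu : ¬ p ∣ u) (j : ℕ) :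
    ¬ p ^ (2 * k + 1) ∣ (q + 1) ^ 2 * q ^ j := by
  have hpq : ¬ p ∣ q := fun h => hp.not_dvd_one <|
    (Nat.dvd_add_right h).mp (hq ▸ dvd_mul_of_dvd_left (dvd_pow_self p (by omega)) u)
  rw [hq, mul_pow, ← pow_mul, mul_assoc, pow_succ, mul_comm k,
    Nat.mul_dvd_mul_iff_left (pow_pos hp.pos _)]
  intro h
  rcases hp.dvd_mul.mp h with h | h
  · exact hu (hp.dvd_of_dvd_pow h)
  · exact hpq (hp.dvd_of_dvd_pow h)

theorem Finsupp.mapDomain_eq_single_iff {σ τ : Type*} {f : σ → τ} {j : σ} {c : τ}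
    (hf : ∀ i, f i = c ↔ i = j) (u : σ →₀ ℕ) (n : ℕ) :
    u.mapDomain f = single c n ↔ u = single j n := by
  classical
  have hfj : f j = c := (hf j).mpr rfl
  refine ⟨fun h => ?_, fun h => by rw [h, mapDomain_single, hfj]⟩
  have hu : u.support ⊆ {j} := by
    intro i hi
    have : f i ∈ (u.mapDomain f).support := by
      rw [mapDomain_support_of_subsingletonAddUnits]
      exact mem_image_of_mem f hi
    rw [h] at this
    exact mem_singleton.mpr ((hf i).mp (mem_singleton.mp (support_single_subset this)))
  rw [support_subset_singleton.mp hu, mapDomain_single, hfj] at h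
  rw [support_subset_singleton.mp hu, single_injective _ h]

namespace MvPolynomial

variable {σ τ R : Type*} [CommSemiring R]

theorem coeff_rename_single {f : σ → τ} {j : σ} {c : τ} (hf : ∀ i, f i = c ↔ i = j)
    (n : ℕ) (p : MvPolynomial σ R) :
    coeff (Finsupp.single c n) (rename f p) = coeff (Finsupp.single j n) p := by
  classical
  induction p using MvPolynomial.induction_on' with
  | monomial u a =>
    simp only [rename_monomial, coeff_monomial, Finsupp.mapDomain_eq_single_iff hf]
  | add p q hp hq => simp only [map_add, coeff_add, hp, hq]

theorem rename_C_mul_X_mul_X_mul {f : σ → τ} {a b : σ} {c : τ} (ha : f a = c) (hb : f b = c)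
    (r : R) (P : MvPolynomial σ R) :
    rename f (C r * X a * X b * P) = monomial (Finsupp.single c 2) r * rename f P := by
  rw [map_mul, map_mul, map_mul, rename_C, rename_X, rename_X, ha, hb, mul_assoc (C r), ← sq,
    C_mul_X_pow_eq_monomial]

theorem coeff_single_add_mul_of_isHomogeneous {P : MvPolynomial σ R} {m : ℕ}
    (hP : P.IsHomogeneous m) (Q : MvPolynomial σ R) (j : σ) (n : ℕ) :
    coeff (Finsupp.single j (m + n)) (P * Q) =
      coeff (Finsupp.single j m) P * coeff (Finsupp.single j n) Q := by
  classical
  rw [coeff_mul, Finsupp.antidiagonal_single, sum_map,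
    sum_eq_single_of_mem (m, n) (mem_antidiagonal.mpr rfl)]
  · rfl
  rintro ⟨a, b⟩ hab hne
  have ha : a ≠ m := by
    rintro rfl
    exact hne (by simpa using mem_antidiagonal.mp hab)
  simp [hP.coeff_eq_zero (d := Finsupp.single j a) (by simpa using ha)]

section SumOfMonomials

variable [Fintype σ]

theorem coeff_sum_C_mul_prod_X_pow (A : Finset (σ → ℕ)) (c : (σ → ℕ) → R) (d : σ →₀ ℕ) :
    coeff d (∑ α ∈ A, C (c α) * ∏ i, X i ^ α i) = if ⇑d ∈ A then c d else 0 := by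
  classical
  have hmon (α : σ → ℕ) :
      ∏ i, (X i : MvPolynomial σ R) ^ α i = monomial (Finsupp.equivFunOnFinite.symm α) 1 := by
    rw [monomial_eq, C_1, one_mul, Finsupp.prod_fintype _ _ (fun i => pow_zero _)]
    rfl
  simp only [coeff_sum, coeff_C_mul, hmon, coeff_monomial, Equiv.symm_apply_eq]
  simp only [mul_ite, mul_one, mul_zero, sum_ite_eq', eq_comm]
  rfl

theorem isHomogeneous_sum_C_mul_prod_X_pow {A : Finset (σ → ℕ)} {n : ℕ}
    (hA : ∀ α ∈ A, ∑ i, α i = n) (c : (σ → ℕ) → R) :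
    (∑ α ∈ A, C (c α) * ∏ i, X i ^ α i).IsHomogeneous n := by
  refine IsHomogeneous.sum _ _ _ fun α hα => ?_
  simpa [hA α hα] using (isHomogeneous_C σ (c α)).mul
    (IsHomogeneous.prod univ _ (fun i => α i) fun i _ => isHomogeneous_X_pow i (α i))

variable [DecidableEq σ]

theorem coeff_single_sum_multinomial_mul_multinomial {a b c : σ} (hac : a ≠ c) (hbc : b ≠ c)
    {q : ℕ} (hq : 1 ≤ q) :
    coeff (Finsupp.single c (q - 1))
        (∑ α ∈ (Fintype.piFinset fun _ : σ => range q).filter (fun α => ∑ i, α i = q - 1),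
          C ((Nat.multinomial univ (fun j => α j + if j = a then 1 else 0) : R) *
            (Nat.multinomial univ (fun j => α j + if j = b then 1 else 0) : R)) *
          ∏ i, X i ^ α i) = (q : R) * q := by
  have hmem : ⇑(Finsupp.single c (q - 1)) ∈
      (Fintype.piFinset fun _ : σ => range q).filter (fun α => ∑ i, α i = q - 1) := by
    simp only [mem_filter, Fintype.mem_piFinset, mem_range, Finsupp.single_apply]
    exact ⟨fun i => by split_ifs <;> omega, by simp⟩
  rw [coeff_sum_C_mul_prod_X_pow, if_pos hmem, Nat.multinomial_single_add_ite hac,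
    Nat.multinomial_single_add_ite hbc, Nat.sub_add_cancel hq]

end SumOfMonomials

end MvPolynomial


/-- for the black edge ℓ = e₁ − e₂,
c(ℓ)² = (q+1)² ξ₁ξ₂ (Σ_{|α|₁=q−1} multinomial(q,α+e₁) multinomial(q,α+e₂) ξ^α)²,
evaluated at ξ₁ = ξ₂ (rename ξ₂ ↦ ξ₁), contains the monomial
(q+1)² q⁴ ξ₁² ξ₃^{2(q−1)}; hence if q+1 = p^k u with p prime, gcd(p,u) = 1 and
k ≥ 1 (and m ≥ 3), then c(ℓ)²|_{ξ₁=ξ₂} is not divisible by p^{4k}. -/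
theorem csq_not_div_p4k (q m : ℕ) (hq : 1 ≤ q) (hm : 3 ≤ m) :
    let i0 : Fin m := ⟨0, by omega⟩
    let i1 : Fin m := ⟨1, by omega⟩
    let i2 : Fin m := ⟨2, by omega⟩
    let S : MvPolynomial (Fin m) ℤ :=
      ∑ α ∈ (Fintype.piFinset fun _ : Fin m => Finset.range q).filter
          (fun α => ∑ i, α i = q - 1),
        MvPolynomial.C
            ((Nat.multinomial Finset.univ
                (fun j => α j + if j = i0 then 1 else 0) : ℤ) *
              (Nat.multinomial Finset.univ
                (fun j => α j + if j = i1 then 1 else 0) : ℤ)) *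
          ∏ i, MvPolynomial.X i ^ α i
    let csq : MvPolynomial (Fin m) ℤ :=
      MvPolynomial.C (((q : ℤ) + 1) ^ 2) *
        MvPolynomial.X i0 * MvPolynomial.X i1 * S ^ 2
    let csqDiag : MvPolynomial (Fin m) ℤ :=
      MvPolynomial.rename (fun j => if j = i1 then i0 else j) csq
    MvPolynomial.coeff
        (Finsupp.single i0 2 + Finsupp.single i2 (2 * (q - 1))) csqDiag =
      ((q : ℤ) + 1) ^ 2 * (q : ℤ) ^ 4 ∧
    ∀ p k u : ℕ, p.Prime → 1 ≤ k → q + 1 = p ^ k * u → ¬ p ∣ u →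
      ¬ ∃ Q : MvPolynomial (Fin m) ℤ, csqDiag = (p : ℤ) ^ (4 * k) • Q := by
  intro i0 i1 i2 S csq csqDiag
  let f : Fin m → Fin m := fun j => if j = i1 then i0 else j
  have h02 : i0 ≠ i2 := by simp [i0, i2, Fin.ext_iff]
  have h12 : i1 ≠ i2 := by simp [i1, i2, Fin.ext_iff]
  have hf : ∀ i, f i = i2 ↔ i = i2 := fun i => by
    by_cases hi : i = i1
    · simp [f, hi, h02, h12]
    · simp [f, hi]
  have hS : S.IsHomogeneous (q - 1) :=
    isHomogeneous_sum_C_mul_prod_X_pow (fun α hα => (mem_filter.mp hα).2) _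
  have hdiag : csqDiag = monomial (Finsupp.single i0 2) (((q : ℤ) + 1) ^ 2) * rename f S ^ 2 := by
    change rename f (C _ * X i0 * X i1 * S ^ 2) = _
    have hf0 : f i0 = i0 := ite_self i0
    have hf1 : f i1 = i0 := if_pos rfl
    rw [rename_C_mul_X_mul_X_mul hf0 hf1, map_pow (rename f) S]
  have hcoeff : coeff (Finsupp.single i0 2 + Finsupp.single i2 (2 * (q - 1))) csqDiag =
      ((q : ℤ) + 1) ^ 2 * (q : ℤ) ^ 4 := by
    rw [hdiag, coeff_monomial_mul, two_mul, sq (rename f S),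
      coeff_single_add_mul_of_isHomogeneous hS.rename_isHomogeneous, coeff_rename_single hf,
      coeff_single_sum_multinomial_mul_multinomial h02 h12 hq]
    ring
  refine ⟨hcoeff, ?_⟩
  rintro p k u hp hk hqu hpu ⟨Q, hQ⟩
  have hdvd : (p : ℤ) ^ (4 * k) ∣ ((q : ℤ) + 1) ^ 2 * (q : ℤ) ^ 4 :=
    hcoeff ▸ hQ ▸ ⟨coeff _ Q, by rw [coeff_smul, smul_eq_mul]⟩
  refine Nat.not_pow_dvd_sq_mul_pow hp hk hqu hpu 4 ?_
  exact (pow_dvd_pow p (show 2 * k + 1 ≤ 4 * k by omega)).trans (by exact_mod_cast hdvd)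
end
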